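/- Let α ∈ (0, 1/4) be irrational with convergent denominators (q_s). Define K_α = { Σ_{s=1}^∞ b_s ⟨q_s α⟩ : (b_s) ∈ {0,1}^{ℕ*} }, where ⟨β⟩ denotes the representative of β mod 1 in [−1/2,1/2). Then every element of K_α is a limit of elements of ℤ + αℤ: precisely, for each (b_s) ∈ {0,1}^{ℕ*}, setting n_S = Σ_{s=1}^S b_s q_s, the partial sums Σ_{s=1}^S b_s ⟨q_s α⟩ equal ⟨n_S α⟩ ∈ ℤ + αℤ and converge to the corresponding element of K_α. -/

import Mathlib

/-!
Write `εₙ = qₙ α - pₙ` for the errors of the convergents `pₙ / qₙ`. They alternate in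
sign and satisfy `εₙ₊₂ = aₙ₊₂ εₙ₊₁ + εₙ` with `aₙ₊₂ ≥ 1`, hence `|εₙ₊₁| + |εₙ₊₂| ≤ |εₙ|`.
Telescoping gives `∑_{s ≥ 1} |ε_s| ≤ |ε₀| + |ε₁| ≤ 2 {α} < 1/2`. So `n_S α` is an integer
plus `∑ b_s ε_s`, a number of absolute value `< 1/2`, which is therefore `⟨n_S α⟩`; in
particular `⟨q_s α⟩ = ε_s`.
-/

/-- The representative of `x` mod 1 lying in `[-1/2, 1/2)`. -/
noncomputable def repr1 (x : ℝ) : ℝ := x - round x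

theorem repr1_intCast_add (p : ℤ) {x : ℝ} (hx : |x| < 1 / 2) : repr1 (p + x) = x := by
  have hround : round x = 0 :=
    round_eq_zero_iff.mpr ⟨by linarith [neg_abs_le x], by linarith [le_abs_self x]⟩
  rw [repr1, round_intCast_add, hround]
  push_cast
  ring

theorem repr1_sum_intCast_mul {ι : Type*} (t : Finset ι) (b : ι → ℤ) (x : ι → ℝ)
    (h : ∑ s ∈ t, |b s * repr1 (x s)| < 1 / 2) :
    repr1 (∑ s ∈ t, b s * x s) = ∑ s ∈ t, b s * repr1 (x s) := by
  have hsplit : ∑ s ∈ t, b s * x s =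
      ((∑ s ∈ t, b s * round (x s) : ℤ) : ℝ) + ∑ s ∈ t, b s * repr1 (x s) := by
    push_cast
    rw [← Finset.sum_add_distrib]
    simp only [repr1, mul_sub, add_sub_cancel]
  rw [hsplit, repr1_intCast_add _ ((Finset.abs_sum_le_sum_abs _ _).trans_lt h)]

namespace GenContFract

variable {α : ℝ}

noncomputable def convErr (α : ℝ) (n : ℕ) : ℝ :=
  (GenContFract.of α).dens n * α - (GenContFract.of α).nums n

theorem not_terminatedAt_of_irrational (hα : Irrational α) (n : ℕ) :
    ¬(GenContFract.of α).TerminatedAt n := fun h ↦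
  have ⟨q, hq⟩ := (terminates_iff_rat α).mp ⟨n, h⟩
  hα ⟨q, hq.symm⟩

theorem exists_s_get?_eq_some_of_irrational (hα : Irrational α) (n : ℕ) :
    ∃ gp, (GenContFract.of α).s.get? n = some gp :=
  Option.ne_none_iff_exists'.mp fun h ↦
    not_terminatedAt_of_irrational hα n (terminatedAt_iff_s_none.mpr h)

theorem exists_stream_eq_some_fr_ne_zero_of_irrational (hα : Irrational α) (n : ℕ) :
    ∃ ifp, IntFractPair.stream α n = some ifp ∧ ifp.fr ≠ 0 := by
  have hne : ∀ m, IntFractPair.stream α m ≠ none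
    | 0 => by simp [IntFractPair.stream_zero]
    | m + 1 => fun h ↦ not_terminatedAt_of_irrational hα m
        (of_terminatedAt_n_iff_succ_nth_intFractPair_stream_eq_none.mpr h)
  obtain ⟨ifp, hifp⟩ := Option.ne_none_iff_exists'.mp (hne n)
  exact ⟨ifp, hifp, fun hfr ↦
    hne (n + 1) (IntFractPair.stream_eq_none_of_fr_eq_zero hifp hfr)⟩

theorem dens_pos_of_irrational (hα : Irrational α) (n : ℕ) : 0 < (GenContFract.of α).dens n :=
  (Nat.cast_pos.mpr (Nat.fib_pos.mpr n.succ_pos)).trans_le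
    (succ_nth_fib_le_of_nth_den (Or.inr (not_terminatedAt_of_irrational hα (n - 1))))

theorem exists_int_nums_eq_of_irrational (hα : Irrational α) (n : ℕ) :
    ∃ p : ℤ, (GenContFract.of α).nums n = p := by
  induction n using Nat.twoStepInduction with
  | zero => exact ⟨⌊α⌋, by rw [zeroth_num_eq_h, of_h_eq_floor]⟩
  | one =>
    obtain ⟨gp, hs⟩ := exists_s_get?_eq_some_of_irrational hα 0
    obtain ⟨z, hz⟩ := exists_int_eq_of_partDen (partDen_eq_s_b hs)
    refine ⟨z * ⌊α⌋ + 1, ?_⟩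
    rw [first_num_eq hs, of_partNum_eq_one (partNum_eq_s_a hs), of_h_eq_floor, hz]
    push_cast
    ring
  | more n ih₀ ih₁ =>
    obtain ⟨p₀, hp₀⟩ := ih₀
    obtain ⟨p₁, hp₁⟩ := ih₁
    obtain ⟨gp, hs⟩ := exists_s_get?_eq_some_of_irrational hα (n + 1)
    obtain ⟨z, hz⟩ := exists_int_eq_of_partDen (partDen_eq_s_b hs)
    refine ⟨z * p₁ + p₀, ?_⟩
    rw [nums_recurrence hs hp₀ hp₁, of_partNum_eq_one (partNum_eq_s_a hs), hz]
    push_cast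
    ring

theorem convErr_zero : convErr α 0 = Int.fract α := by
  rw [convErr, zeroth_den_eq_one, zeroth_num_eq_h, of_h_eq_floor, one_mul, Int.fract]

theorem convErr_add_two {n : ℕ} {gp : Pair ℝ}
    (hs : (GenContFract.of α).s.get? (n + 1) = some gp) :
    convErr α (n + 2) = gp.b * convErr α (n + 1) + convErr α n := by
  simp only [convErr, nums_recurrence hs rfl rfl, dens_recurrence hs rfl rfl,
    of_partNum_eq_one (partNum_eq_s_a hs)]
  ring

theorem neg_one_pow_mul_convErr_pos (hα : Irrational α) (n : ℕ) :
    0 < (-1) ^ n * convErr α n := by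
  obtain ⟨ifp, hst, hfr⟩ := exists_stream_eq_some_fr_ne_zero_of_irrational hα n
  have h := sub_convs_eq hst
  simp only [if_neg hfr] at h
  rw [← nth_cont_eq_succ_nth_contAux, ← den_eq_conts_b] at h
  have hB := dens_pos_of_irrational hα n
  have hpB : 0 ≤ ((GenContFract.of α).contsAux n).b := zero_le_of_contsAux_b
  have hfr : 0 < ifp.fr := (IntFractPair.nth_stream_fr_nonneg hst).lt_of_ne' hfr
  have hconv :
      convErr α n = (GenContFract.of α).dens n * (α - (GenContFract.of α).convs n) := by
    rw [convErr, conv_eq_num_div_den]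
    field_simp
  have : convErr α n =
      (-1) ^ n / (ifp.fr⁻¹ * (GenContFract.of α).dens n + ((GenContFract.of α).contsAux n).b) := by
    rw [hconv, h]
    field_simp
  rw [this, mul_div_assoc', ← pow_add, ← two_mul, pow_mul, neg_one_sq, one_pow]
  positivity

theorem abs_convErr (hα : Irrational α) (n : ℕ) : |convErr α n| = (-1) ^ n * convErr α n := by
  rw [← abs_of_pos (neg_one_pow_mul_convErr_pos hα n), abs_mul, abs_neg_one_pow, one_mul]

theorem abs_convErr_succ_add_abs_convErr_add_two_le (hα : Irrational α) (n : ℕ) :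
    |convErr α (n + 1)| + |convErr α (n + 2)| ≤ |convErr α n| := by
  obtain ⟨gp, hs⟩ := exists_s_get?_eq_some_of_irrational hα (n + 1)
  have hb : 1 ≤ gp.b := of_one_le_get?_partDen (partDen_eq_s_b hs)
  have hpos := neg_one_pow_mul_convErr_pos hα (n + 1)
  rw [abs_convErr hα, abs_convErr hα, abs_convErr hα, convErr_add_two hs]
  simp only [pow_succ] at hpos ⊢
  nlinarith

theorem abs_convErr_antitone (hα : Irrational α) : Antitone fun n ↦ |convErr α n| :=
  antitone_nat_of_succ_le fun n ↦ by
    linarith [abs_convErr_succ_add_abs_convErr_add_two_le hα n, abs_nonneg (convErr α (n + 2))]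

theorem abs_convErr_le_fract (hα : Irrational α) (n : ℕ) : |convErr α n| ≤ Int.fract α := by
  simpa [convErr_zero, abs_of_nonneg (Int.fract_nonneg α)] using abs_convErr_antitone hα n.zero_le

theorem sum_range_abs_convErr_succ_le (hα : Irrational α) (k : ℕ) :
    ∑ i ∈ Finset.range k, |convErr α (i + 1)| ≤ 2 * Int.fract α := by
  set g : ℕ → ℝ := fun i ↦ |convErr α i| + |convErr α (i + 1)|
  calc ∑ i ∈ Finset.range k, |convErr α (i + 1)|
      ≤ ∑ i ∈ Finset.range k, (g i - g (i + 1)) :=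
        Finset.sum_le_sum fun i _ ↦ by
          linarith [abs_convErr_succ_add_abs_convErr_add_two_le hα i]
    _ = g 0 - g k := Finset.sum_range_sub' g k
    _ ≤ 2 * Int.fract α := by
        linarith [abs_convErr_le_fract hα 0, abs_convErr_le_fract hα 1, abs_nonneg (convErr α k),
          abs_nonneg (convErr α (k + 1))]

theorem summable_abs_convErr_succ (hα : Irrational α) :
    Summable fun n ↦ |convErr α (n + 1)| :=
  summable_of_sum_range_le (fun _ ↦ abs_nonneg _) (sum_range_abs_convErr_succ_le hα)

theorem repr1_dens_mul_eq_convErr (hα : Irrational α) (hfract : Int.fract α < 1 / 2)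
    (n : ℕ) : repr1 ((GenContFract.of α).dens n * α) = convErr α n := by
  obtain ⟨p, hp⟩ := exists_int_nums_eq_of_irrational hα n
  have : (GenContFract.of α).dens n * α = p + convErr α n := by rw [convErr, hp]; ring
  rw [this, repr1_intCast_add p ((abs_convErr_le_fract hα n).trans_lt hfract)]

end GenContFract

theorem Finset.sum_Icc_one_eq_sum_range {M : Type*} [AddCommMonoid M] (f : ℕ → M) (n : ℕ) :
    ∑ i ∈ Finset.Icc 1 n, f i = ∑ i ∈ Finset.range n, f (i + 1) := by
  rw [Finset.range_eq_Ico, Finset.sum_Ico_add', zero_add, Finset.Ico_add_one_right_eq_Icc]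

open GenContFract in
/-- Let `α ∈ (0,1/4)` be irrational, with convergent denominators `q_s`, and let
`(b_s) ∈ {0,1}^{ℕ*}`. Then the partial sums `Σ_{s=1}^S b_s ⟨q_s α⟩` equal
`⟨n_S α⟩` with `n_S = Σ_{s=1}^S b_s q_s`, the series is summable, and the partial
sums converge to the corresponding element of `K_α`. -/
theorem stmt14 (α : ℝ) (hirr : Irrational α) (hα : α ∈ Set.Ioo (0 : ℝ) (1/4))
    (q : ℕ → ℝ) (hq : ∀ s, q s = (GenContFract.of α).dens s)
    (b : ℕ → ℕ) (hb : ∀ s, b s ≤ 1) :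
    (∀ S : ℕ, repr1 ((∑ s ∈ Finset.Icc 1 S, (b s : ℝ) * q s) * α) =
        ∑ s ∈ Finset.Icc 1 S, (b s : ℝ) * repr1 (q s * α)) ∧
      Summable (fun s : ℕ => (b (s + 1) : ℝ) * repr1 (q (s + 1) * α)) ∧
      Filter.Tendsto
        (fun S : ℕ => ∑ s ∈ Finset.Icc 1 S, (b s : ℝ) * repr1 (q s * α))
        Filter.atTop
        (nhds (∑' s : ℕ, (b (s + 1) : ℝ) * repr1 (q (s + 1) * α))) := by
  have hfract : Int.fract α = α := Int.fract_eq_self.mpr ⟨hα.1.le, by linarith [hα.2]⟩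
  obtain rfl : q = fun s ↦ (GenContFract.of α).dens s := funext hq
  have hrepr := repr1_dens_mul_eq_convErr hirr (by linarith [hα.2])
  have hbε (s : ℕ) : |(b s : ℝ) * convErr α s| ≤ |convErr α s| := by
    rw [abs_mul, Nat.abs_cast]
    exact mul_le_of_le_one_left (abs_nonneg _) (by exact_mod_cast hb s)
  have hsummable : Summable fun s ↦ (b (s + 1) : ℝ) * convErr α (s + 1) :=
    (summable_abs_convErr_succ hirr).of_norm_bounded fun s ↦ hbε (s + 1)
  simp only [hrepr, Finset.sum_Icc_one_eq_sum_range]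
  refine ⟨fun S ↦ ?_, hsummable, hsummable.hasSum.tendsto_sum_nat⟩
  have hsmall : ∑ s ∈ Finset.Icc 1 S,
      |((b s : ℤ) : ℝ) * repr1 ((GenContFract.of α).dens s * α)| < 1 / 2 := by
    calc _ ≤ ∑ i ∈ Finset.range S, |convErr α (i + 1)| := by
          simpa [hrepr, Finset.sum_Icc_one_eq_sum_range] using
            Finset.sum_le_sum fun i _ ↦ hbε (i + 1)
      _ ≤ 2 * Int.fract α := sum_range_abs_convErr_succ_le hirr S
      _ < 1 / 2 := by linarith [hα.2]
  have := repr1_sum_intCast_mul _ _ _ hsmall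
  simp only [Int.cast_natCast, hrepr, Finset.sum_Icc_one_eq_sum_range] at this
  simpa [Finset.sum_mul, mul_assoc] using this
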